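/- If R_min < 1 < R_max, then the three sets {p ∈ [0,1]^N : Λ(p) < 0}, {p ∈ [0,1]^N : Λ(p) > 0}, and {p ∈ [0,1]^N : Λ(p) = 0} are all nonempty. -/

import Mathlib

open Matrix Filter Topology

/-- Spectral radius of a real matrix: sup of absolute values of its complex eigenvalues. -/
noncomputable def specRad (N : ℕ) (A : Matrix (Fin N) (Fin N) ℝ) : ℝ :=
  sSup {r : ℝ | ∃ μ ∈ spectrum ℂ (A.map (Complex.ofReal : ℝ → ℂ)), r = ‖μ‖}

/-- Spectral abscissa of a real matrix: sup of real parts of its complex eigenvalues. -/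
noncomputable def specAbsc (N : ℕ) (A : Matrix (Fin N) (Fin N) ℝ) : ℝ :=
  sSup {r : ℝ | ∃ μ ∈ spectrum ℂ (A.map (Complex.ofReal : ℝ → ℂ)), r = μ.re}

/-- Irreducibility of a nonnegative matrix. -/
def MatIrreducible (N : ℕ) (A : Matrix (Fin N) (Fin N) ℝ) : Prop :=
  ∀ i j : Fin N, ∃ m : ℕ, 0 < m ∧ 0 < (A ^ m) i j

/-- The cube [0,1]^N. -/
def cube (N : ℕ) : Set (Fin N → ℝ) := {p | ∀ j, 0 ≤ p j ∧ p j ≤ 1}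

/-- B*(p) = (I − diag p) B̂ + diag p · B. -/
noncomputable def Bstar (N : ℕ) (B Bh : Matrix (Fin N) (Fin N) ℝ) (p : Fin N → ℝ) :
    Matrix (Fin N) (Fin N) ℝ :=
  (1 - Matrix.diagonal p) * Bh + Matrix.diagonal p * B

/-- The network SIRI vector field on (p^S, p^I). -/
noncomputable def siriField (N : ℕ) (B Bh D : Matrix (Fin N) (Fin N) ℝ)
    (y : (Fin N → ℝ) × (Fin N → ℝ)) : (Fin N → ℝ) × (Fin N → ℝ) :=
  (fun j => -(y.1 j * (B *ᵥ y.2) j),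
   fun j => ((Bstar N B Bh y.1 - D) *ᵥ y.2) j - y.2 j * (Bh *ᵥ y.2) j)

/-- Membership in the state space Δ_N. -/
def inSimplex (N : ℕ) (y : (Fin N → ℝ) × (Fin N → ℝ)) : Prop :=
  ∀ j, 0 ≤ y.1 j ∧ 0 ≤ y.2 j ∧ y.1 j + y.2 j ≤ 1

/-- y is a solution of the SIRI dynamics for t ≥ 0. -/
def IsSol (N : ℕ) (B Bh D : Matrix (Fin N) (Fin N) ℝ)
    (y : ℝ → (Fin N → ℝ) × (Fin N → ℝ)) : Prop :=
  ∀ t : ℝ, 0 ≤ t → HasDerivAt y (siriField N B Bh D (y t)) t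

/-- Reproduction number R(p) = ρ(B*(p) D⁻¹). -/
noncomputable def Rnum (N : ℕ) (B Bh D : Matrix (Fin N) (Fin N) ℝ) (p : Fin N → ℝ) : ℝ :=
  specRad N (Bstar N B Bh p * D⁻¹)

/-- Maximum basic reproduction number. -/
noncomputable def Rmax (N : ℕ) (B Bh D : Matrix (Fin N) (Fin N) ℝ) : ℝ :=
  sSup (Rnum N B Bh D '' cube N)

/-- Minimum basic reproduction number. -/
noncomputable def Rmin (N : ℕ) (B Bh D : Matrix (Fin N) (Fin N) ℝ) : ℝ :=
  sInf (Rnum N B Bh D '' cube N)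


/-!
For a nonnegative `M` and a positive diagonal `D`, the spectral abscissa of `M - D` has the sign
of `ρ(M D⁻¹) - 1`: in each direction the modulus of a suitable eigenvector is subinvariant for
the other matrix, and a nonnegative subinvariant vector bounds the spectral radius from below
(Collatz–Wielandt). The direction `ρ(M D⁻¹) > 1 → Λ > 0` needs the Perron–Frobenius fact that
the spectral radius of a nonnegative matrix is an eigenvalue. Points of the cube with `R < 1`
and with `R > 1` therefore have `Λ < 0` and `Λ > 0`.

For `c ≥ max δ`, `Λ(p) = ρ(B*(p) - D + c) - c` with a nonnegative matrix inside. On nonnegative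
matrices the spectral radius is continuous: upper semicontinuous by Gelfand's formula, lower
semicontinuous because it is monotone and homogeneous. The intermediate value theorem on the
convex cube then gives a zero of `Λ`.
-/

open scoped ENNReal NNReal Pointwise

attribute [local instance] Matrix.linftyOpNormedAddCommGroup Matrix.linftyOpNormedRing
  Matrix.linftyOpNormedAlgebra

lemma Set.Finite.exists_apply_eq_sSup {α : Type*} {S : Set α} (hS : S.Finite)
    (hne : S.Nonempty) (f : α → ℝ) : ∃ μ ∈ S, f μ = sSup {r | ∃ μ ∈ S, r = f μ} := by
  obtain ⟨μ, hμ, h⟩ := (hne.image f).csSup_mem (hS.image f)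
  exact ⟨μ, hμ, by simpa [Set.image, eq_comm] using h⟩

lemma Set.Finite.apply_le_sSup {α : Type*} {S : Set α} (hS : S.Finite) (f : α → ℝ) {μ : α}
    (hμ : μ ∈ S) : f μ ≤ sSup {r | ∃ μ ∈ S, r = f μ} :=
  le_csSup (by simpa [Set.image, eq_comm] using (hS.image f).bddAbove) ⟨μ, hμ, rfl⟩

namespace Matrix

variable {n : Type*}

lemma sub_diagonal_add_smul_one_nonneg [DecidableEq n] {M : Matrix n n ℝ}
    (hM : ∀ j k, 0 ≤ M j k) {δ : n → ℝ} {c : ℝ} (hc : ∀ j, δ j ≤ c) (j k : n) :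
    0 ≤ (M - diagonal δ + c • 1) j k := by
  by_cases hjk : j = k
  · subst hjk
    simp only [add_apply, sub_apply, diagonal_apply_eq, smul_apply, one_apply_eq, smul_eq_mul,
      mul_one]
    linarith [hM j j, hc j]
  · simpa [diagonal_apply_ne _ hjk, one_apply_ne hjk] using hM j k

variable [Fintype n]

lemma linfty_opNorm_le_of_abs_le {A C : Matrix n n ℝ} (h : ∀ j k, |A j k| ≤ C j k) :
    ‖A‖ ≤ ‖C‖ := by
  simp only [linfty_opNorm_def, NNReal.coe_le_coe]
  refine Finset.sup_mono_fun fun j _ => Finset.sum_le_sum fun k _ => ?_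
  rw [← NNReal.coe_le_coe, coe_nnnorm, coe_nnnorm, Real.norm_eq_abs, Real.norm_eq_abs]
  exact (h j k).trans (le_abs_self _)

lemma sum_apply_le_linfty_opNorm {A : Matrix n n ℝ} (hA : ∀ j k, 0 ≤ A j k) (j : n) :
    ∑ k, A j k ≤ ‖A‖ := by
  rw [linfty_opNorm_def]
  calc ∑ k, A j k = ((∑ k, ‖A j k‖₊ : ℝ≥0) : ℝ) := by
        push_cast
        exact Finset.sum_congr rfl fun k _ => (abs_of_nonneg (hA j k)).symm
    _ ≤ _ := NNReal.coe_le_coe.2 (Finset.le_sup (f := fun i => ∑ k, ‖A i k‖₊) (Finset.mem_univ j))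

variable [DecidableEq n]

lemma abs_pow_apply_le {A C : Matrix n n ℝ} (h : ∀ j k, |A j k| ≤ C j k) (m : ℕ) (j k : n) :
    |(A ^ m) j k| ≤ (C ^ m) j k := by
  have hC : ∀ j k, 0 ≤ C j k := fun j k => (abs_nonneg _).trans (h j k)
  induction m generalizing k with
  | zero => by_cases hjk : j = k <;> simp [hjk]
  | succ m ih =>
    rw [pow_succ, pow_succ, mul_apply, mul_apply]
    refine (Finset.abs_sum_le_sum_abs _ _).trans (Finset.sum_le_sum fun l _ => ?_)
    rw [abs_mul]
    exact mul_le_mul (ih l) (h l k) (abs_nonneg _) (pow_apply_nonneg hC m j l)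

lemma inv_diagonal_of_ne_zero {K : Type*} [Field K] {δ : n → K} (hδ : ∀ j, δ j ≠ 0) :
    (diagonal δ)⁻¹ = diagonal δ⁻¹ :=
  inv_eq_left_inv <| by
    rw [diagonal_mul_diagonal, ← diagonal_one]
    exact congrArg diagonal (funext fun j => inv_mul_cancel₀ (hδ j))

lemma exists_mulVec_eq_smul_of_mem_spectrum {K : Type*} [Field K] {A : Matrix n n K} {μ : K}
    (h : μ ∈ spectrum K A) : ∃ v, v ≠ 0 ∧ A *ᵥ v = μ • v := by
  rw [← spectrum_toLin', ← Module.End.hasEigenvalue_iff_mem_spectrum] at h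
  obtain ⟨v, hv⟩ := h.exists_hasEigenvector
  exact ⟨v, hv.2, by simpa using hv.apply_eq_smul⟩

end Matrix

section SpectralRadius

variable {N : ℕ}

/-- `specRad N A` and `specAbsc N A` are read off the spectrum of `A.map (↑) = toComplex A`. -/
noncomputable abbrev toComplex : Matrix (Fin N) (Fin N) ℝ →ₐ[ℝ] Matrix (Fin N) (Fin N) ℂ :=
  Complex.ofRealAm.mapMatrix

lemma toComplex_apply (A : Matrix (Fin N) (Fin N) ℝ) (j k : Fin N) :
    toComplex A j k = (A j k : ℂ) := rfl

lemma toComplex_diagonal (δ : Fin N → ℝ) :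
    toComplex (diagonal δ) = diagonal fun j => (δ j : ℂ) := by
  simp [AlgHom.mapMatrix_apply]

lemma norm_toComplex (A : Matrix (Fin N) (Fin N) ℝ) : ‖toComplex A‖ = ‖A‖ := by
  simp [linfty_opNorm_def]

lemma norm_toComplex_mulVec_apply_le {M : Matrix (Fin N) (Fin N) ℝ} (hM : ∀ j k, 0 ≤ M j k)
    (v : Fin N → ℂ) (j : Fin N) : ‖(toComplex M *ᵥ v) j‖ ≤ (M *ᵥ fun k => ‖v k‖) j := by
  simp only [mulVec, dotProduct]
  refine (norm_sum_le _ _).trans (le_of_eq (Finset.sum_congr rfl fun k _ => ?_))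
  rw [norm_mul, toComplex_apply, Complex.norm_real, Real.norm_of_nonneg (hM j k)]

lemma det_toComplex (A : Matrix (Fin N) (Fin N) ℝ) : (toComplex A).det = (A.det : ℂ) :=
  (Complex.ofRealHom.map_det A).symm

lemma ofReal_mem_spectrum_toComplex (A : Matrix (Fin N) (Fin N) ℝ) (c : ℝ) :
    (c : ℂ) ∈ spectrum ℂ (toComplex A) ↔ c ∈ spectrum ℝ A := by
  have : algebraMap ℂ _ (c : ℂ) - toComplex A = toComplex (algebraMap ℝ _ c - A) := by
    rw [map_sub, AlgHom.commutes, IsScalarTower.algebraMap_apply ℝ ℂ]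
    rfl
  rw [spectrum.mem_iff, spectrum.mem_iff, this, isUnit_iff_isUnit_det, isUnit_iff_isUnit_det,
    det_toComplex, isUnit_iff_ne_zero, isUnit_iff_ne_zero, Complex.ofReal_ne_zero]

lemma finite_spectrum_toComplex (A : Matrix (Fin N) (Fin N) ℝ) :
    (spectrum ℂ (toComplex A)).Finite :=
  Matrix.finite_spectrum _

lemma norm_le_specRad {A : Matrix (Fin N) (Fin N) ℝ} {μ : ℂ}
    (hμ : μ ∈ spectrum ℂ (toComplex A)) : ‖μ‖ ≤ specRad N A :=
  (finite_spectrum_toComplex A).apply_le_sSup (fun μ : ℂ => ‖μ‖) hμ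

lemma re_le_specAbsc {A : Matrix (Fin N) (Fin N) ℝ} {μ : ℂ}
    (hμ : μ ∈ spectrum ℂ (toComplex A)) : μ.re ≤ specAbsc N A :=
  (finite_spectrum_toComplex A).apply_le_sSup Complex.re hμ

variable [NeZero N]

lemma exists_norm_eq_specRad (A : Matrix (Fin N) (Fin N) ℝ) :
    ∃ μ ∈ spectrum ℂ (toComplex A), ‖μ‖ = specRad N A :=
  (finite_spectrum_toComplex A).exists_apply_eq_sSup (spectrum.nonempty _) (fun μ : ℂ => ‖μ‖)

lemma exists_re_eq_specAbsc (A : Matrix (Fin N) (Fin N) ℝ) :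
    ∃ μ ∈ spectrum ℂ (toComplex A), μ.re = specAbsc N A :=
  (finite_spectrum_toComplex A).exists_apply_eq_sSup (spectrum.nonempty _) Complex.re

lemma specRad_nonneg (A : Matrix (Fin N) (Fin N) ℝ) : 0 ≤ specRad N A := by
  obtain ⟨μ, -, h⟩ := exists_norm_eq_specRad A
  exact h ▸ norm_nonneg μ

lemma specAbsc_le_specRad (A : Matrix (Fin N) (Fin N) ℝ) : specAbsc N A ≤ specRad N A := by
  obtain ⟨μ, hμ, h⟩ := exists_re_eq_specAbsc A
  exact h ▸ (Complex.re_le_norm μ).trans (norm_le_specRad hμ)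

lemma spectralRadius_toComplex (A : Matrix (Fin N) (Fin N) ℝ) :
    spectralRadius ℂ (toComplex A) = ENNReal.ofReal (specRad N A) := by
  refine le_antisymm (iSup₂_le fun μ hμ => ?_) ?_
  · rw [← ENNReal.ofReal_coe_nnreal, coe_nnnorm]
    exact ENNReal.ofReal_le_ofReal (norm_le_specRad hμ)
  · obtain ⟨μ, hμ, h⟩ := exists_norm_eq_specRad A
    rw [← h, ← coe_nnnorm, ENNReal.ofReal_coe_nnreal]
    exact le_iSup₂ (f := fun μ (_ : μ ∈ spectrum ℂ (toComplex A)) => (‖μ‖₊ : ℝ≥0∞)) μ hμ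

lemma specRad_pow_le_norm_pow (A : Matrix (Fin N) (Fin N) ℝ) (m : ℕ) :
    specRad N A ^ m ≤ ‖A ^ m‖ := by
  obtain ⟨μ, hμ, h⟩ := exists_norm_eq_specRad A
  calc specRad N A ^ m = ‖μ ^ m‖ := by rw [norm_pow, h]
    _ ≤ ‖toComplex A ^ m‖ := spectrum.norm_le_norm_of_mem (spectrum.pow_mem_pow _ m hμ)
    _ = ‖A ^ m‖ := by rw [← map_pow, norm_toComplex]

lemma eventually_norm_pow_le_of_specRad_lt {A : Matrix (Fin N) (Fin N) ℝ} {t : ℝ}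
    (h : specRad N A < t) : ∀ᶠ m in atTop, ‖A ^ m‖ ≤ t ^ m := by
  have ht : 0 < t := (specRad_nonneg A).trans_lt h
  have hlim := spectrum.pow_nnnorm_pow_one_div_tendsto_nhds_spectralRadius (toComplex A)
  rw [spectralRadius_toComplex] at hlim
  filter_upwards [hlim.eventually_lt_const ((ENNReal.ofReal_lt_ofReal_iff ht).2 h),
    eventually_ne_atTop 0] with m hm hm0
  have hm' := ENNReal.rpow_lt_rpow hm (Nat.cast_pos.2 (Nat.pos_of_ne_zero hm0))
  rw [← ENNReal.rpow_mul, one_div_mul_cancel (Nat.cast_ne_zero.2 hm0), ENNReal.rpow_one,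
    ENNReal.rpow_natCast, ← ENNReal.ofReal_pow ht.le, ← map_pow, ← ENNReal.ofReal_coe_nnreal,
    coe_nnnorm, norm_toComplex] at hm'
  exact ((ENNReal.ofReal_lt_ofReal_iff_of_nonneg (norm_nonneg _)).1 hm').le

lemma specRad_le_of_eventually_norm_pow_le {A : Matrix (Fin N) (Fin N) ℝ} {t : ℝ} (ht : 0 ≤ t)
    (h : ∀ᶠ m in atTop, ‖A ^ m‖ ≤ t ^ m) : specRad N A ≤ t := by
  obtain ⟨m, hm, hm0⟩ := (h.and (eventually_ne_atTop 0)).exists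
  exact le_of_pow_le_pow_left₀ hm0 ht ((specRad_pow_le_norm_pow A m).trans hm)

lemma le_specRad_of_pow_le_norm_pow {A : Matrix (Fin N) (Fin N) ℝ} {t : ℝ}
    (h : ∀ m, t ^ m ≤ ‖A ^ m‖) : t ≤ specRad N A := by
  by_contra! hlt
  obtain ⟨s, hAs, hst⟩ := exists_between hlt
  have hs : 0 ≤ s := (specRad_nonneg A).trans hAs.le
  obtain ⟨m, hm, hm0⟩ :=
    ((eventually_norm_pow_le_of_specRad_lt hAs).and (eventually_ne_atTop 0)).exists
  exact (pow_lt_pow_left₀ hst hs hm0).not_ge ((h m).trans hm)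

lemma specRad_le_specRad_of_abs_le {A C : Matrix (Fin N) (Fin N) ℝ}
    (h : ∀ j k, |A j k| ≤ C j k) : specRad N A ≤ specRad N C :=
  le_of_forall_gt_imp_ge_of_dense fun _ ht =>
    specRad_le_of_eventually_norm_pow_le ((specRad_nonneg C).trans ht.le) <|
      (eventually_norm_pow_le_of_specRad_lt ht).mono fun m hm =>
        (linfty_opNorm_le_of_abs_le (abs_pow_apply_le h m)).trans hm

lemma specRad_smul {c : ℝ} (hc : 0 ≤ c) (A : Matrix (Fin N) (Fin N) ℝ) :
    specRad N (c • A) = c * specRad N A := by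
  have hσ : spectrum ℂ (toComplex (c • A)) = (c : ℂ) • spectrum ℂ (toComplex A) := by
    rw [map_smul, ← algebraMap_smul ℂ c, spectrum.smul_eq_smul _ _ (spectrum.nonempty _)]
    rfl
  have hnorm (μ : ℂ) : ‖(c : ℂ) * μ‖ = c * ‖μ‖ := by
    rw [norm_mul, Complex.norm_real, Real.norm_of_nonneg hc]
  obtain ⟨μ, hμ, hμρ⟩ := exists_norm_eq_specRad (c • A)
  obtain ⟨ν, hν, hνρ⟩ := exists_norm_eq_specRad A
  rw [hσ] at hμ
  obtain ⟨μ, hμ, rfl⟩ := hμ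
  refine le_antisymm ?_ ?_
  · rw [← hμρ]
    simp only [smul_eq_mul, hnorm]
    exact mul_le_mul_of_nonneg_left (norm_le_specRad hμ) hc
  · rw [← hνρ, ← hnorm]
    exact norm_le_specRad (hσ ▸ Set.smul_mem_smul_set hν)

lemma le_specRad_of_smul_le_mulVec {A : Matrix (Fin N) (Fin N) ℝ} (hA : ∀ j k, 0 ≤ A j k)
    {u : Fin N → ℝ} (hu : ∀ j, 0 ≤ u j) (hu0 : u ≠ 0) {t : ℝ} (ht : 0 ≤ t)
    (h : ∀ j, t * u j ≤ (A *ᵥ u) j) : t ≤ specRad N A := by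
  have hiter (m : ℕ) (j : Fin N) : t ^ m * u j ≤ (A ^ m *ᵥ u) j := by
    induction m generalizing j with
    | zero => simp
    | succ m ih =>
      rw [pow_succ' A, ← mulVec_mulVec, pow_succ t, mul_assoc]
      calc t ^ m * (t * u j) ≤ t ^ m * (A *ᵥ u) j :=
            mul_le_mul_of_nonneg_left (h j) (by positivity)
        _ = ∑ k, A j k * (t ^ m * u k) := by
            simp only [mulVec, dotProduct, Finset.mul_sum]
            ring_nf
        _ ≤ (A *ᵥ (A ^ m *ᵥ u)) j :=
            Finset.sum_le_sum fun k _ => mul_le_mul_of_nonneg_left (ih k) (hA j k)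
  obtain ⟨j₀, -, hj₀⟩ := Finset.exists_max_image Finset.univ u Finset.univ_nonempty
  have hu₀ : 0 < u j₀ := by
    obtain ⟨k, hk⟩ := Function.ne_iff.1 hu0
    exact (lt_of_le_of_ne (hu k) (Ne.symm hk)).trans_le (hj₀ k (Finset.mem_univ k))
  refine le_specRad_of_pow_le_norm_pow fun m => le_of_mul_le_mul_right ?_ hu₀
  calc t ^ m * u j₀ ≤ ∑ k, (A ^ m) j₀ k * u k := hiter m j₀
    _ ≤ ∑ k, (A ^ m) j₀ k * u j₀ := Finset.sum_le_sum fun k _ =>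
        mul_le_mul_of_nonneg_left (hj₀ k (Finset.mem_univ k)) (pow_apply_nonneg hA m j₀ k)
    _ ≤ ‖A ^ m‖ * u j₀ := by
        rw [← Finset.sum_mul]
        exact mul_le_mul_of_nonneg_right
          (sum_apply_le_linfty_opNorm (pow_apply_nonneg hA m) j₀) hu₀.le

end SpectralRadius

section PerronFrobenius

variable {N : ℕ} [NeZero N]

lemma hasSum_pow_of_specRad_lt_one {A : Matrix (Fin N) (Fin N) ℝ} (h : specRad N A < 1) :
    HasSum (fun m => A ^ m) (1 - A)⁻¹ := by
  obtain ⟨s, hAs, hs1⟩ := exists_between h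
  have hsum : Summable fun m => A ^ m :=
    .of_norm_bounded_eventually_nat
      (summable_geometric_of_lt_one ((specRad_nonneg A).trans hAs.le) hs1)
      (eventually_norm_pow_le_of_specRad_lt hAs)
  rw [inv_eq_left_inv hsum.tsum_pow_mul_one_sub]
  exact hsum.hasSum

lemma sum_range_pow_apply_le_inv {A : Matrix (Fin N) (Fin N) ℝ} (hA : ∀ j k, 0 ≤ A j k)
    (h1 : specRad N A = 1) (hunit : IsUnit (1 - A).det) (n : ℕ) (j k : Fin N) :
    ∑ m ∈ Finset.range n, (A ^ m) j k ≤ (1 - A)⁻¹ j k := by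
  have hpartial : ∀ s ∈ Set.Ioo (0 : ℝ) 1,
      ∑ m ∈ Finset.range n, s ^ m * (A ^ m) j k ≤ (1 - s • A)⁻¹ j k := by
    rintro s ⟨hs0, hs1⟩
    have hsA : specRad N (s • A) < 1 := by rwa [specRad_smul hs0.le, h1, mul_one]
    have hsum := Pi.hasSum.1 (Pi.hasSum.1 (hasSum_pow_of_specRad_lt_one hsA) j) k
    simp only [smul_pow, Matrix.smul_apply, smul_eq_mul] at hsum
    exact sum_le_hasSum _ (fun m _ => mul_nonneg (by positivity) (pow_apply_nonneg hA m j k)) hsum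
  have hinv : ContinuousAt (fun s : ℝ => (1 - s • A)⁻¹ j k) 1 := by
    have : ContinuousAt Inv.inv (1 - (1 : ℝ) • A) := by
      rw [one_smul]
      refine continuousAt_matrix_inv _ ?_
      rw [Ring.inverse_eq_inv']
      exact continuousAt_inv₀ hunit.ne_zero
    exact (continuous_apply_apply j k).continuousAt.comp
      (this.comp (f := fun s : ℝ => 1 - s • A) (by fun_prop))
  have hsums : Tendsto (fun s : ℝ => ∑ m ∈ Finset.range n, s ^ m * (A ^ m) j k) (𝓝[<] 1)
      (𝓝 (∑ m ∈ Finset.range n, (A ^ m) j k)) := by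
    have hcont : Continuous fun s : ℝ => ∑ m ∈ Finset.range n, s ^ m * (A ^ m) j k := by
      fun_prop
    simpa using (hcont.tendsto 1).mono_left nhdsWithin_le_nhds
  refine le_of_tendsto_of_tendsto hsums
    (by simpa using hinv.tendsto.mono_left nhdsWithin_le_nhds) ?_
  filter_upwards [Ioo_mem_nhdsLT one_pos] with s hs using hpartial s hs

/-- If `1 - A` were invertible, the partial sums of `∑ Aᵐ` would stay below `(1 - A)⁻¹`
entrywise, forcing `Aᵐ → 0`, which is impossible when `ρ(A) = 1`. -/
lemma one_mem_spectrum_of_specRad_eq_one {A : Matrix (Fin N) (Fin N) ℝ}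
    (hA : ∀ j k, 0 ≤ A j k) (h1 : specRad N A = 1) : (1 : ℝ) ∈ spectrum ℝ A := by
  by_contra hmem
  have hunit : IsUnit (1 - A).det := by
    rw [← isUnit_iff_isUnit_det]
    simpa [spectrum.mem_iff] using hmem
  have hsummable (j k : Fin N) : Summable fun m => (A ^ m) j k :=
    summable_of_sum_range_le (fun m => pow_apply_nonneg hA m j k)
      (sum_range_pow_apply_le_inv hA h1 hunit · j k)
  have hlim : Tendsto (fun m => A ^ m) atTop (𝓝 0) :=
    tendsto_pi_nhds.2 fun j => tendsto_pi_nhds.2 fun k => (hsummable j k).tendsto_atTop_zero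
  replace hlim : Tendsto (fun m => ‖A ^ m‖) atTop (𝓝 0) := by simpa using hlim.norm
  obtain ⟨m, hm⟩ := (hlim.eventually_lt_const one_pos).exists
  have := specRad_pow_le_norm_pow A m
  rw [h1, one_pow] at this
  exact this.not_gt hm

theorem specRad_mem_spectrum {A : Matrix (Fin N) (Fin N) ℝ} (hA : ∀ j k, 0 ≤ A j k) :
    specRad N A ∈ spectrum ℝ A := by
  rcases (specRad_nonneg A).eq_or_lt with h0 | hpos
  · obtain ⟨μ, hμ, hμ0⟩ := exists_norm_eq_specRad A
    rw [← h0, norm_eq_zero] at hμ0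
    rwa [← h0, ← ofReal_mem_spectrum_toComplex, Complex.ofReal_zero, ← hμ0]
  · set r := Units.mk0 (specRad N A) hpos.ne'
    have h1 : specRad N ((r⁻¹ : ℝˣ) • A) = 1 := by
      rw [Units.smul_def, specRad_smul (by simp [r, hpos.le]), Units.val_inv_eq_inv_val,
        Units.val_mk0, inv_mul_cancel₀ hpos.ne']
    have := one_mem_spectrum_of_specRad_eq_one (fun j k => ?_) h1
    · rwa [← spectrum.smul_mem_smul_iff (r := r), smul_inv_smul, Units.smul_def, smul_eq_mul,
        mul_one, Units.val_mk0] at this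
    · simpa [Units.smul_def, r] using mul_nonneg (inv_nonneg.2 hpos.le) (hA j k)

lemma specAbsc_eq_specRad {A : Matrix (Fin N) (Fin N) ℝ} (hA : ∀ j k, 0 ≤ A j k) :
    specAbsc N A = specRad N A :=
  (specAbsc_le_specRad A).antisymm <| by
    simpa using re_le_specAbsc ((ofReal_mem_spectrum_toComplex A _).2 (specRad_mem_spectrum hA))

lemma specAbsc_add_smul_one (A : Matrix (Fin N) (Fin N) ℝ) (c : ℝ) :
    specAbsc N (A + c • 1) = specAbsc N A + c := by
  have hσ : spectrum ℂ (toComplex (A + c • 1)) = spectrum ℂ (toComplex A) + {(c : ℂ)} := by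
    rw [spectrum.add_singleton_eq, map_add, map_smul, map_one, Algebra.algebraMap_eq_smul_one,
      ← algebraMap_smul ℂ c]
    rfl
  obtain ⟨μ, hμ, hμs⟩ := exists_re_eq_specAbsc (A + c • 1)
  obtain ⟨ν, hν, hνs⟩ := exists_re_eq_specAbsc A
  rw [hσ] at hμ
  obtain ⟨μ, hμ, _, rfl, rfl⟩ := hμ
  refine le_antisymm ?_ ?_
  · simpa [← hμs] using re_le_specAbsc hμ
  · simpa [← hνs] using re_le_specAbsc (hσ ▸ Set.add_mem_add hν rfl : ν + c ∈ _)

lemma specAbsc_eq_specRad_add_smul_one_sub {A : Matrix (Fin N) (Fin N) ℝ} {c : ℝ}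
    (hA : ∀ j k, 0 ≤ (A + c • 1) j k) : specAbsc N A = specRad N (A + c • 1) - c := by
  rw [← specAbsc_eq_specRad hA, specAbsc_add_smul_one, add_sub_cancel_right]

end PerronFrobenius

section Continuity

variable {N : ℕ} [NeZero N] {X : Type*} [TopologicalSpace X]
  {A : X → Matrix (Fin N) (Fin N) ℝ} {s : Set X} {x : X}

lemma upperSemicontinuousWithinAt_specRad (hA : ContinuousWithinAt A s x) :
    UpperSemicontinuousWithinAt (fun y => specRad N (A y)) s x := by
  intro b hb
  obtain ⟨t, hxt, htb⟩ := exists_between hb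
  have ht : 0 ≤ t := (specRad_nonneg _).trans hxt.le
  obtain ⟨m, hm, hm0⟩ :=
    ((eventually_norm_pow_le_of_specRad_lt hxt).and (eventually_ne_atTop 0)).exists
  have hnorm : ContinuousWithinAt (fun y => ‖A y ^ m‖) s x := (hA.pow m).norm
  filter_upwards [hnorm.eventually_lt_const (hm.trans_lt (pow_lt_pow_left₀ htb ht hm0))]
    with y hy
  exact lt_of_pow_lt_pow_left₀ m (ht.trans htb.le) ((specRad_pow_le_norm_pow _ m).trans_lt hy)

lemma lowerSemicontinuousWithinAt_specRad (hA : ContinuousWithinAt A s x)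
    (hnn : ∀ y ∈ s, ∀ j k, 0 ≤ A y j k) (hx : x ∈ s) :
    LowerSemicontinuousWithinAt (fun y => specRad N (A y)) s x := by
  intro b hb
  rcases lt_or_ge b 0 with hb0 | hb0
  · exact .of_forall fun y => hb0.trans_le (specRad_nonneg _)
  have hρ : 0 < specRad N (A x) := hb0.trans_lt hb
  obtain ⟨σ, hbσ, hσ1⟩ := exists_between ((div_lt_one hρ).2 hb)
  have hσ : 0 ≤ σ := (div_nonneg hb0 hρ.le).trans hbσ.le
  have hentry : ∀ᶠ y in 𝓝[s] x, ∀ j k, σ * A x j k ≤ A y j k := by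
    simp only [eventually_all]
    intro j k
    rcases (hnn x hx j k).eq_or_lt with h0 | hpos
    · filter_upwards [self_mem_nhdsWithin] with y hy
      rw [← h0, mul_zero]
      exact hnn y hy j k
    · have hjk : ContinuousWithinAt (fun y => A y j k) s x :=
        (continuous_apply_apply j k).continuousAt.comp_continuousWithinAt hA
      exact (hjk.eventually_const_lt (mul_lt_of_lt_one_left hpos hσ1)).mono fun _ => le_of_lt
  filter_upwards [hentry] with y hy
  calc b < σ * specRad N (A x) := (div_lt_iff₀ hρ).1 hbσ
    _ = specRad N (σ • A x) := (specRad_smul hσ _).symm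
    _ ≤ specRad N (A y) := specRad_le_specRad_of_abs_le fun j k => by
      rw [Matrix.smul_apply, smul_eq_mul, abs_of_nonneg (mul_nonneg hσ (hnn x hx j k))]
      exact hy j k

lemma ContinuousOn.specRad (hA : ContinuousOn A s) (hnn : ∀ y ∈ s, ∀ j k, 0 ≤ A y j k) :
    ContinuousOn (fun y => specRad N (A y)) s := fun x hx =>
  continuousWithinAt_iff_lower_upperSemicontinuousWithinAt.2
    ⟨lowerSemicontinuousWithinAt_specRad (hA x hx) hnn hx,
      upperSemicontinuousWithinAt_specRad (hA x hx)⟩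

lemma ContinuousOn.specAbsc (hA : ContinuousOn A s) {c : ℝ}
    (hnn : ∀ y ∈ s, ∀ j k, 0 ≤ (A y + c • 1) j k) :
    ContinuousOn (fun y => specAbsc N (A y)) s :=
  (((hA.add continuousOn_const).specRad hnn).sub continuousOn_const).congr fun y hy =>
    specAbsc_eq_specRad_add_smul_one_sub (hnn y hy)

end Continuity

section ReproductionNumber

variable {N : ℕ} [NeZero N] {M : Matrix (Fin N) (Fin N) ℝ} {δ : Fin N → ℝ}

/-- With `v` an eigenvector of `M - D` for an eigenvalue `μ` with `0 ≤ re μ`, the vector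
`D |v|` is subinvariant for `M D⁻¹`. -/
lemma one_le_specRad_mul_inv_of_specAbsc_nonneg (hM : ∀ j k, 0 ≤ M j k) (hδ : ∀ j, 0 < δ j)
    (h : 0 ≤ specAbsc N (M - diagonal δ)) : 1 ≤ specRad N (M * (diagonal δ)⁻¹) := by
  obtain ⟨μ, hμ, hμs⟩ := exists_re_eq_specAbsc (M - diagonal δ)
  obtain ⟨v, hv0, hv⟩ := exists_mulVec_eq_smul_of_mem_spectrum hμ
  have hMv (j : Fin N) : (toComplex M *ᵥ v) j = (δ j + μ) * v j := by
    have := congrFun hv j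
    rw [map_sub, sub_mulVec, toComplex_diagonal, Pi.sub_apply, mulVec_diagonal] at this
    simp only [Pi.smul_apply, smul_eq_mul] at this
    linear_combination this
  set u : Fin N → ℝ := fun k => ‖v k‖
  rw [inv_diagonal_of_ne_zero fun j => (hδ j).ne']
  refine le_specRad_of_smul_le_mulVec (u := diagonal δ *ᵥ u) (fun j k => ?_) (fun j => ?_) ?_
    zero_le_one fun j => ?_
  · rw [mul_diagonal]
    exact mul_nonneg (hM j k) (inv_nonneg.2 (hδ k).le)
  · rw [mulVec_diagonal]
    exact mul_nonneg (hδ j).le (norm_nonneg _)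
  · obtain ⟨k, hk⟩ := Function.ne_iff.1 hv0
    refine Function.ne_iff.2 ⟨k, ?_⟩
    rw [mulVec_diagonal]
    exact mul_ne_zero (hδ k).ne' (norm_ne_zero_iff.2 hk)
  · have hu : diagonal δ⁻¹ *ᵥ (diagonal δ *ᵥ u) = u := by
      ext k
      simp [mulVec_diagonal, (hδ k).ne']
    rw [← mulVec_mulVec, hu, one_mul, mulVec_diagonal]
    calc δ j * u j ≤ ‖(δ j : ℂ) + μ‖ * u j := by
          refine mul_le_mul_of_nonneg_right ?_ (norm_nonneg _)
          refine le_trans ?_ (Complex.re_le_norm _)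
          simpa [hμs] using h
      _ = ‖(toComplex M *ᵥ v) j‖ := by rw [hMv, norm_mul]
      _ ≤ (M *ᵥ u) j := norm_toComplex_mulVec_apply_le hM v j

/-- With `v` a Perron eigenvector of `M D⁻¹` for `r = ρ(M D⁻¹)`, the vector `|D⁻¹ v|` is
subinvariant for `M - D + c` with ratio `c + (r - 1) min δ`. -/
lemma specAbsc_sub_pos_of_one_lt_specRad_mul_inv (hM : ∀ j k, 0 ≤ M j k) (hδ : ∀ j, 0 < δ j)
    (h : 1 < specRad N (M * (diagonal δ)⁻¹)) : 0 < specAbsc N (M - diagonal δ) := by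
  rw [inv_diagonal_of_ne_zero fun j => (hδ j).ne'] at h
  set r := specRad N (M * diagonal δ⁻¹)
  have hQ (j k : Fin N) : 0 ≤ (M * diagonal δ⁻¹) j k := by
    rw [mul_diagonal]
    exact mul_nonneg (hM j k) (inv_nonneg.2 (hδ k).le)
  obtain ⟨v, hv0, hv⟩ := exists_mulVec_eq_smul_of_mem_spectrum
    ((ofReal_mem_spectrum_toComplex _ _).2 (specRad_mem_spectrum hQ))
  set x : Fin N → ℂ := toComplex (diagonal δ⁻¹) *ᵥ v
  have hMx (j : Fin N) : (toComplex M *ᵥ x) j = r * δ j * x j := by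
    have hδj : (δ j : ℂ) ≠ 0 := Complex.ofReal_ne_zero.2 (hδ j).ne'
    rw [mulVec_mulVec, ← map_mul, hv]
    simp [x, r, mulVec_diagonal, mul_assoc, mul_inv_cancel_left₀ hδj]
  set u : Fin N → ℝ := fun k => ‖x k‖
  have hu0 : u ≠ 0 := by
    obtain ⟨k, hk⟩ := Function.ne_iff.1 hv0
    refine Function.ne_iff.2 ⟨k, ?_⟩
    simpa [u, x, toComplex_diagonal, mulVec_diagonal, (hδ k).ne'] using hk
  obtain ⟨d, hd, hdδ⟩ : ∃ d > 0, ∀ j, d ≤ δ j :=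
    ⟨Finset.univ.inf' Finset.univ_nonempty δ, (Finset.lt_inf'_iff _).2 fun j _ => hδ j,
      fun j => Finset.inf'_le _ (Finset.mem_univ j)⟩
  set c := ∑ j, δ j
  have hcδ (j : Fin N) : δ j ≤ c :=
    Finset.single_le_sum (fun k _ => (hδ k).le) (Finset.mem_univ j)
  have hY := sub_diagonal_add_smul_one_nonneg hM hcδ
  have hρY : c + (r - 1) * d ≤ specRad N (M - diagonal δ + c • 1) := by
    refine le_specRad_of_smul_le_mulVec hY (fun j => norm_nonneg _) hu0
      (add_nonneg (Finset.sum_nonneg fun j _ => (hδ j).le) (mul_nonneg (by linarith) hd.le))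
      fun j => ?_
    have hMu : r * δ j * u j ≤ (M *ᵥ u) j := by
      calc r * δ j * u j = ‖(toComplex M *ᵥ x) j‖ := by
            rw [hMx, norm_mul, norm_mul, Complex.norm_real, Complex.norm_real,
              Real.norm_of_nonneg (specRad_nonneg _), Real.norm_of_nonneg (hδ j).le]
        _ ≤ (M *ᵥ u) j := norm_toComplex_mulVec_apply_le hM x j
    have hd' : (r - 1) * d * u j ≤ (r - 1) * δ j * u j :=
      mul_le_mul_of_nonneg_right (mul_le_mul_of_nonneg_left (hdδ j) (by linarith))
        (norm_nonneg _)
    simp only [add_mulVec, sub_mulVec, smul_mulVec, one_mulVec, Pi.add_apply, Pi.sub_apply,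
      mulVec_diagonal, Pi.smul_apply, smul_eq_mul]
    nlinarith
  rw [specAbsc_eq_specRad_add_smul_one_sub hY]
  nlinarith

end ReproductionNumber

section Cube

variable {N : ℕ}

lemma cube_eq_Icc (N : ℕ) : cube N = Set.Icc 0 1 := by
  ext p
  simp [cube, Pi.le_def, forall_and]

lemma isPreconnected_cube (N : ℕ) : IsPreconnected (cube N) :=
  cube_eq_Icc N ▸ (convex_Icc 0 1).isPreconnected

lemma Bstar_apply (B Bh : Matrix (Fin N) (Fin N) ℝ) (p : Fin N → ℝ) (j k : Fin N) :
    Bstar N B Bh p j k = (1 - p j) * Bh j k + p j * B j k := by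
  simp [Bstar, sub_mul, diagonal_mul]

lemma Bstar_nonneg {B Bh : Matrix (Fin N) (Fin N) ℝ} (hB : ∀ j k, 0 ≤ B j k)
    (hBh : ∀ j k, 0 ≤ Bh j k) {p : Fin N → ℝ} (hp : p ∈ cube N) (j k : Fin N) :
    0 ≤ Bstar N B Bh p j k := by
  rw [Bstar_apply]
  obtain ⟨hp0, hp1⟩ := hp j
  exact add_nonneg (mul_nonneg (sub_nonneg.2 hp1) (hBh j k)) (mul_nonneg hp0 (hB j k))

lemma continuous_Bstar (B Bh : Matrix (Fin N) (Fin N) ℝ) : Continuous (Bstar N B Bh) := by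
  unfold Bstar
  fun_prop

end Cube

theorem stmt12_general {N : ℕ} (hN : 2 ≤ N) (B Bh : Matrix (Fin N) (Fin N) ℝ) (δ : Fin N → ℝ)
    (hB : ∀ j k, 0 ≤ B j k)
    (hBh : ∀ j k, 0 ≤ Bh j k)
    (hδ : ∀ j, 0 < δ j)
    (hRmin : Rmin N B Bh (Matrix.diagonal δ) < 1)
    (hRmax : 1 < Rmax N B Bh (Matrix.diagonal δ)) :
    (∃ p ∈ cube N, specAbsc N (Bstar N B Bh p - Matrix.diagonal δ) < 0) ∧
    (∃ p ∈ cube N, 0 < specAbsc N (Bstar N B Bh p - Matrix.diagonal δ)) ∧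
    (∃ p ∈ cube N, specAbsc N (Bstar N B Bh p - Matrix.diagonal δ) = 0) := by
  have : NeZero N := ⟨by omega⟩
  have hnn (p) (hp : p ∈ cube N) := Bstar_nonneg hB hBh hp
  have hne : (Rnum N B Bh (diagonal δ) '' cube N).Nonempty :=
    ⟨_, 0, fun _ => ⟨le_rfl, zero_le_one⟩, rfl⟩
  obtain ⟨_, ⟨p₁, hp₁, rfl⟩, hR₁⟩ := exists_lt_of_csInf_lt hne hRmin
  obtain ⟨_, ⟨p₂, hp₂, rfl⟩, hR₂⟩ := exists_lt_of_lt_csSup hne hRmax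
  have hΛ₁ : specAbsc N (Bstar N B Bh p₁ - diagonal δ) < 0 := not_le.1 fun h =>
    hR₁.not_ge (one_le_specRad_mul_inv_of_specAbsc_nonneg (hnn p₁ hp₁) hδ h)
  have hΛ₂ := specAbsc_sub_pos_of_one_lt_specRad_mul_inv (hnn p₂ hp₂) hδ hR₂
  have hcδ (j : Fin N) : δ j ≤ ∑ k, δ k :=
    Finset.single_le_sum (fun k _ => (hδ k).le) (Finset.mem_univ j)
  have hcont : ContinuousOn (fun p => specAbsc N (Bstar N B Bh p - diagonal δ)) (cube N) :=
    ((continuous_Bstar B Bh).sub continuous_const).continuousOn.specAbsc fun p hp =>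
      sub_diagonal_add_smul_one_nonneg (hnn p hp) hcδ
  obtain ⟨p₀, hp₀, hΛ₀⟩ :=
    (isPreconnected_cube N).intermediate_value hp₁ hp₂ hcont ⟨hΛ₁.le, hΛ₂.le⟩
  exact ⟨⟨p₁, hp₁, hΛ₁⟩, ⟨p₂, hp₂, hΛ₂⟩, ⟨p₀, hp₀, hΛ₀⟩⟩

/-- if R_min < 1 < R_max then the negative, positive, and zero level
sets of Λ on the cube are all nonempty. -/
theorem stmt12 {N : ℕ} (hN : 2 ≤ N) (B Bh : Matrix (Fin N) (Fin N) ℝ) (δ : Fin N → ℝ)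
    (hB : ∀ j k, 0 ≤ B j k) (hBirr : MatIrreducible N B)
    (hBh : ∀ j k, 0 ≤ Bh j k) (hz : ∀ j k, B j k = 0 → Bh j k = 0)
    (hδ : ∀ j, 0 < δ j)
    (hRmin : Rmin N B Bh (Matrix.diagonal δ) < 1)
    (hRmax : 1 < Rmax N B Bh (Matrix.diagonal δ)) :
    (∃ p ∈ cube N, specAbsc N (Bstar N B Bh p - Matrix.diagonal δ) < 0) ∧
    (∃ p ∈ cube N, 0 < specAbsc N (Bstar N B Bh p - Matrix.diagonal δ)) ∧
    (∃ p ∈ cube N, specAbsc N (Bstar N B Bh p - Matrix.diagonal δ) = 0) :=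
  stmt12_general hN B Bh δ hB hBh hδ hRmin hRmax
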